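/- Let d, T be positive integers, λ ≥ 1, and x_1, …, x_T ∈ ℝ^d with ‖x_t‖_2 ≤ 1 for every t. With V_0 = λ I_d and V_t = λ I_d + ∑_{s=1}^t x_s x_sᵀ, one has ∑_{t=1}^T ‖x_t‖²_{V_{t-1}^{-1}} ≤ 2 log( det(V_T) / det(λ I_d) ). -/

import Mathlib

open Matrix Finset

/-- `‖z‖_W := √(zᵀ W z)` for a `d × d` real matrix `W`. -/
noncomputable def matNorm {d : ℕ} (W : Matrix (Fin d) (Fin d) ℝ) (z : Fin d → ℝ) : ℝ :=
  Real.sqrt (z ⬝ᵥ (W *ᵥ z))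

/-! By the matrix determinant lemma, `det V_t = det V_{t-1} * (1 + q_t)` with
`q_t = x_tᵀ V_{t-1}⁻¹ x_t`, so `log (det V_T / det V_0) = ∑ log (1 + q_t)`. Since
`V_{t-1} ⪰ λ I` with `λ ≥ 1` and `‖x_t‖ ≤ 1`, each `q_t` lies in `[0, 1]`, where
`u ≤ 2 log (1 + u)`. -/

namespace Matrix

variable {n : Type*} [Fintype n] [DecidableEq n]

theorem det_add_vecMulVec {R : Type*} [CommRing R] {A : Matrix n n R} (hA : IsUnit A.det)
    (u v : n → R) : (A + vecMulVec u v).det = A.det * (1 + v ⬝ᵥ A⁻¹ *ᵥ u) := by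
  rw [vecMulVec_eq Unit, det_add_replicateCol_mul_replicateRow hA, Matrix.mul_assoc,
    ← replicateCol_mulVec, replicateRow_mul_replicateCol, det_unique (1 + of _)]
  rfl

theorem dotProduct_inv_smul_one_add_mulVec_le {lam : ℝ} (hlam : 0 < lam) {S : Matrix n n ℝ}
    (hS : S.PosSemidef) (x : n → ℝ) :
    0 ≤ x ⬝ᵥ (lam • 1 + S)⁻¹ *ᵥ x ∧ x ⬝ᵥ (lam • 1 + S)⁻¹ *ᵥ x ≤ (x ⬝ᵥ x) / lam := by
  set V := lam • (1 : Matrix n n ℝ) + S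
  have hV : V.PosDef := (PosDef.one.smul hlam).add_posSemidef hS
  set y := V⁻¹ *ᵥ x
  -- `x ⬝ᵥ y = y ⬝ᵥ V *ᵥ y ≥ λ (y ⬝ᵥ y)`, which Cauchy–Schwarz compares with `(x ⬝ᵥ y)²`.
  have hxy : x ⬝ᵥ y = lam * (y ⬝ᵥ y) + y ⬝ᵥ S *ᵥ y := by
    have hVy : V *ᵥ y = x := by
      rw [mulVec_mulVec, mul_nonsing_inv _ hV.det_pos.ne'.isUnit, one_mulVec]
    rw [← hVy, dotProduct_comm, add_mulVec, dotProduct_add, smul_mulVec, one_mulVec,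
      dotProduct_smul, smul_eq_mul]
  have hxx : 0 ≤ x ⬝ᵥ x := by simpa using PosSemidef.one.dotProduct_mulVec_nonneg x
  have hyy : 0 ≤ y ⬝ᵥ y := by simpa using PosSemidef.one.dotProduct_mulVec_nonneg y
  have hySy : 0 ≤ y ⬝ᵥ S *ᵥ y := by simpa using hS.dotProduct_mulVec_nonneg y
  have hq : lam * (y ⬝ᵥ y) ≤ x ⬝ᵥ y := by rw [hxy]; linarith
  have hq0 : 0 ≤ x ⬝ᵥ y := by rw [hxy]; positivity
  have hcs : (x ⬝ᵥ y) ^ 2 ≤ (x ⬝ᵥ x) * (y ⬝ᵥ y) := by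
    simpa only [dotProduct, sq] using sum_mul_sq_le_sq_mul_sq univ x y
  have key : (x ⬝ᵥ y) * (lam * (x ⬝ᵥ y)) ≤ (x ⬝ᵥ y) * (x ⬝ᵥ x) := by
    nlinarith [mul_le_mul_of_nonneg_left hq hxx]
  refine ⟨hq0, ?_⟩
  rw [le_div_iff₀ hlam]
  rcases hq0.eq_or_lt with hq0 | hq0
  · rw [← hq0]; simpa using hxx
  · linarith [le_of_mul_le_mul_left key hq0]

theorem det_eq_det_mul_prod_of_add_vecMulVec {R : Type*} [CommRing R] {A : ℕ → Matrix n n R}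
    {u v : ℕ → n → R} (hA : ∀ t, A (t + 1) = A t + vecMulVec (u (t + 1)) (v (t + 1)))
    (hdet : ∀ t, IsUnit (A t).det) (T : ℕ) :
    (A T).det = (A 0).det * ∏ t ∈ Icc 1 T, (1 + v t ⬝ᵥ (A (t - 1))⁻¹ *ᵥ u t) := by
  induction T with
  | zero => simp
  | succ T ih =>
    rw [prod_Icc_succ_top (by omega), ← mul_assoc, ← ih, hA, det_add_vecMulVec (hdet T),
      Nat.add_sub_cancel]

end Matrix

theorem Real.le_two_mul_log_one_add {u : ℝ} (h0 : 0 ≤ u) (h1 : u ≤ 1) :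
    u ≤ 2 * Real.log (1 + u) := by
  have hlog := Real.one_sub_inv_le_log_of_pos (by linarith : 0 < 1 + u)
  have h : 1 - (1 + u)⁻¹ = u / (1 + u) := by field_simp; ring
  have : u / 2 ≤ u / (1 + u) := div_le_div_of_nonneg_left h0 (by linarith) (by linarith)
  linarith

theorem sum_sq_norm_le_two_log_det_general (d T : ℕ)
    (lam : ℝ) (hlam : 1 ≤ lam) (x : ℕ → Fin d → ℝ)
    (hx : ∀ t ∈ Finset.Icc 1 T, Real.sqrt (∑ i, (x t i) ^ 2) ≤ 1)
    (V : ℕ → Matrix (Fin d) (Fin d) ℝ)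
    (hV : ∀ t, V t = lam • (1 : Matrix (Fin d) (Fin d) ℝ) +
      ∑ s ∈ Finset.Icc 1 t, vecMulVec (x s) (x s)) :
    ∑ t ∈ Finset.Icc 1 T, (matNorm ((V (t - 1))⁻¹) (x t)) ^ 2 ≤
      2 * Real.log ((V T).det / (lam • (1 : Matrix (Fin d) (Fin d) ℝ)).det) := by
  have hlam0 : 0 < lam := by linarith
  have hS : ∀ t, (∑ s ∈ Icc 1 t, vecMulVec (x s) (x s)).PosSemidef := fun t =>
    posSemidef_sum _ fun s _ => by simpa using posSemidef_vecMulVec_self_star (x s)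
  have hVdet : ∀ t, IsUnit (V t).det := fun t => by
    rw [hV]; exact ((PosDef.one.smul hlam0).add_posSemidef (hS t)).det_pos.ne'.isUnit
  have hstep : ∀ t, V (t + 1) = V t + vecMulVec (x (t + 1)) (x (t + 1)) := fun t => by
    rw [hV, hV, sum_Icc_succ_top (by omega), add_assoc]
  have hq : ∀ t ∈ Icc 1 T,
      0 ≤ x t ⬝ᵥ (V (t - 1))⁻¹ *ᵥ x t ∧ x t ⬝ᵥ (V (t - 1))⁻¹ *ᵥ x t ≤ 1 := fun t ht => by
    obtain ⟨hq0, hq1⟩ :=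
      hV (t - 1) ▸ dotProduct_inv_smul_one_add_mulVec_le hlam0 (hS (t - 1)) (x t)
    have hxx : x t ⬝ᵥ x t ≤ 1 := by simpa [dotProduct, sq] using hx t ht
    exact ⟨hq0, hq1.trans ((div_le_one₀ hlam0).mpr (hxx.trans hlam))⟩
  have hdet : (V T).det / (lam • (1 : Matrix (Fin d) (Fin d) ℝ)).det =
      ∏ t ∈ Icc 1 T, (1 + x t ⬝ᵥ (V (t - 1))⁻¹ *ᵥ x t) := by
    rw [det_eq_det_mul_prod_of_add_vecMulVec hstep hVdet T, hV 0, Icc_eq_empty_of_lt one_pos,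
      sum_empty, add_zero, mul_div_cancel_left₀ _ (by simp [hlam0.ne'])]
  calc ∑ t ∈ Icc 1 T, (matNorm ((V (t - 1))⁻¹) (x t)) ^ 2
      = ∑ t ∈ Icc 1 T, x t ⬝ᵥ (V (t - 1))⁻¹ *ᵥ x t :=
        sum_congr rfl fun t ht => Real.sq_sqrt (hq t ht).1
    _ ≤ ∑ t ∈ Icc 1 T, 2 * Real.log (1 + x t ⬝ᵥ (V (t - 1))⁻¹ *ᵥ x t) :=
        sum_le_sum fun t ht => Real.le_two_mul_log_one_add (hq t ht).1 (hq t ht).2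
    _ = 2 * Real.log ((V T).det / (lam • (1 : Matrix (Fin d) (Fin d) ℝ)).det) := by
        rw [hdet, Real.log_prod fun t ht => by linarith [(hq t ht).1], mul_sum]

/-- if `λ ≥ 1` and `‖x_t‖₂ ≤ 1` for all `t`, then
`∑_{t=1}^T ‖x_t‖²_{V_{t-1}⁻¹} ≤ 2 log(det(V_T)/det(λ I))`. -/
theorem sum_sq_norm_le_two_log_det (d T : ℕ) (hd : 0 < d) (hT : 0 < T)
    (lam : ℝ) (hlam : 1 ≤ lam) (x : ℕ → Fin d → ℝ)
    (hx : ∀ t ∈ Finset.Icc 1 T, Real.sqrt (∑ i, (x t i) ^ 2) ≤ 1)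
    (V : ℕ → Matrix (Fin d) (Fin d) ℝ)
    (hV : ∀ t, V t = lam • (1 : Matrix (Fin d) (Fin d) ℝ) +
      ∑ s ∈ Finset.Icc 1 t, vecMulVec (x s) (x s)) :
    ∑ t ∈ Finset.Icc 1 T, (matNorm ((V (t - 1))⁻¹) (x t)) ^ 2 ≤
      2 * Real.log ((V T).det / (lam • (1 : Matrix (Fin d) (Fin d) ℝ)).det) :=
  sum_sq_norm_le_two_log_det_general d T lam hlam x hx V hV
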